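/- Let γ > 0 and m ∈ ℕ, and define ψ_m : ℝ² → ℂ by ψ_m(x₁,x₂) = (γ^((m+1)/2)/√(π·m!))·(x₁ + i x₂)^m·exp(−γ(x₁²+x₂²)/2). Then the angular-momentum pairing satisfies ∫_{ℝ²} \overline{ψ_m(x)}·( x₂ ∂₁ψ_m(x) − x₁ ∂₂ψ_m(x) ) dx = −i·m. Consequently, for any Ω ∈ ℝ, Re( −iΩ ∫_{ℝ²} \overline{ψ_m}·(x₂∂₁ψ_m − x₁∂₂ψ_m) dx ) = −m·Ω. -/

import Mathlib

/-!
The operator `L = x₂∂₁ - x₁∂₂` is differentiation along the rotation field `(x₂, -x₁)`. Hence it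
is a derivation, it kills every radial function `h(|x|²)`, and it maps the complex coordinate
`z = x₁ + i x₂` to `-i z`. Since `ψ_m = z^m · (radial factor)`, `ψ_m` is an eigenfunction,
`L ψ_m = -i m ψ_m`, and the pairing equals `-i m ‖ψ_m‖²_{L²}`. The normalisation `‖ψ_m‖_{L²} = 1`
is the Gaussian moment `∫ |x|^{2m} e^{-γ|x|²} dx = π m! / γ^{m+1}`, computed in polar coordinates.
-/

open MeasureTheory Complex ComplexConjugate

local notation "ℝ²" => EuclideanSpace ℝ (Fin 2)

noncomputable section

/-- `x 0` and `x 1` are the coordinates `x₁` and `x₂`. -/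
def angularMomentum (f : ℝ² → ℂ) (x : ℝ²) : ℂ :=
  (x 1 : ℂ) * fderiv ℝ f x (EuclideanSpace.single 0 1) -
    (x 0 : ℂ) * fderiv ℝ f x (EuclideanSpace.single 1 1)

def rotationField (x : ℝ²) : ℝ² := !₂[x 1, -x 0]

lemma inner_rotationField_self (x : ℝ²) : inner ℝ x (rotationField x) = 0 := by
  simp only [rotationField, PiLp.inner_apply, RCLike.inner_apply, Real.ringHom_apply,
    Fin.sum_univ_two, Matrix.cons_val_zero, Matrix.cons_val_one, Matrix.cons_val_fin_one]
  ring

lemma angularMomentum_eq_fderiv_rotationField (f : ℝ² → ℂ) (x : ℝ²) :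
    angularMomentum f x = fderiv ℝ f x (rotationField x) := by
  have hrot : rotationField x =
      x 1 • EuclideanSpace.single 0 1 - x 0 • EuclideanSpace.single 1 1 := by
    ext i
    fin_cases i <;> simp [rotationField]
  rw [hrot, map_sub, map_smul, map_smul, real_smul, real_smul, angularMomentum]

lemma HasFDerivAt.angularMomentum_eq {f : ℝ² → ℂ} {f' : ℝ² →L[ℝ] ℂ} {x : ℝ²}
    (hf : HasFDerivAt f f' x) : angularMomentum f x = f' (rotationField x) := by
  rw [angularMomentum_eq_fderiv_rotationField, hf.fderiv]

lemma angularMomentum_mul {f g : ℝ² → ℂ} {x : ℝ²} (hf : DifferentiableAt ℝ f x)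
    (hg : DifferentiableAt ℝ g x) :
    angularMomentum (fun y ↦ f y * g y) x =
      f x * angularMomentum g x + g x * angularMomentum f x := by
  have hfg : HasFDerivAt (fun y ↦ f y * g y) _ x := hf.hasFDerivAt.mul hg.hasFDerivAt
  rw [hfg.angularMomentum_eq, hf.hasFDerivAt.angularMomentum_eq,
    hg.hasFDerivAt.angularMomentum_eq, add_apply, smul_apply, smul_apply, smul_eq_mul,
    smul_eq_mul]

lemma angularMomentum_pow {f : ℝ² → ℂ} {x : ℝ²} (hf : DifferentiableAt ℝ f x) (m : ℕ) :
    angularMomentum (fun y ↦ f y ^ m) x = m * f x ^ (m - 1) * angularMomentum f x := by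
  rw [(hf.hasFDerivAt.pow m).angularMomentum_eq, hf.hasFDerivAt.angularMomentum_eq]
  simp

lemma angularMomentum_comp_norm_sq {h : ℝ → ℂ} {x : ℝ²}
    (hh : DifferentiableAt ℝ h (‖x‖ ^ 2)) :
    angularMomentum (fun y ↦ h (‖y‖ ^ 2)) x = 0 := by
  have hd : HasFDerivAt (fun y : ℝ² ↦ h (‖y‖ ^ 2)) _ x :=
    hh.hasFDerivAt.comp x (hasFDerivAt_id x).norm_sq
  rw [hd.angularMomentum_eq]
  simp [inner_rotationField_self]

def complexCoord : ℝ² →L[ℝ] ℂ := orthonormalBasisOneI.repr.symm.toContinuousLinearEquiv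

lemma complexCoord_apply (x : ℝ²) : complexCoord x = x 0 + I * x 1 := by
  simp only [complexCoord, ContinuousLinearEquiv.coe_coe,
    LinearIsometryEquiv.coe_toContinuousLinearEquiv, orthonormalBasisOneI_repr_symm_apply]
  ring

lemma norm_complexCoord (x : ℝ²) : ‖complexCoord x‖ = ‖x‖ :=
  orthonormalBasisOneI.repr.symm.norm_map x

lemma angularMomentum_complexCoord (x : ℝ²) :
    angularMomentum complexCoord x = -I * complexCoord x := by
  rw [complexCoord.hasFDerivAt.angularMomentum_eq, complexCoord_apply, complexCoord_apply]
  simp only [rotationField, Matrix.cons_val_zero, Matrix.cons_val_one,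
    Matrix.cons_val_fin_one, ofReal_neg, mul_neg, neg_mul]
  linear_combination (x 1 : ℂ) * I_sq

lemma angularMomentum_complexCoord_pow_mul_radial (m : ℕ) {h : ℝ → ℂ}
    (hh : Differentiable ℝ h) (x : ℝ²) :
    angularMomentum (fun y ↦ complexCoord y ^ m * h (‖y‖ ^ 2)) x =
      -I * m * (complexCoord x ^ m * h (‖x‖ ^ 2)) := by
  have hz := complexCoord.differentiableAt (x := x)
  have hradial : DifferentiableAt ℝ (fun y : ℝ² ↦ h (‖y‖ ^ 2)) x :=
    (hh _).comp x (differentiableAt_id.norm_sq ℝ)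
  rw [angularMomentum_mul (f := fun y ↦ complexCoord y ^ m) (hz.pow m) hradial,
    angularMomentum_comp_norm_sq (hh _), angularMomentum_pow hz, angularMomentum_complexCoord]
  rcases m with _ | m
  · simp
  · simp only [pow_succ]
    push_cast
    ring

lemma integral_fun_norm_euclideanSpace_fin_two {E : Type*} [NormedAddCommGroup E]
    [NormedSpace ℝ E] (f : ℝ → E) : ∫ x : ℝ², f ‖x‖ = ∫ z : ℂ, f ‖z‖ := by
  rw [← orthonormalBasisOneI.repr.measurePreserving.integral_comp
    orthonormalBasisOneI.repr.toHomeomorph.measurableEmbedding]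
  simp only [LinearIsometryEquiv.norm_map]

lemma integral_norm_pow_mul_exp_neg_mul_sq {b : ℝ} (hb : 0 < b) (m : ℕ) :
    ∫ x : ℝ², ‖x‖ ^ (2 * m) * Real.exp (-b * ‖x‖ ^ 2) =
      Real.pi * m.factorial / b ^ (m + 1) := by
  have hpolar := Complex.integral_rpow_mul_exp_neg_mul_rpow (p := 2) (q := 2 * m) one_le_two
    (by linarith [(m.cast_nonneg : (0 : ℝ) ≤ m)]) hb
  rw [show (2 * (m : ℝ) + 2) / 2 = (m : ℕ) + 1 by ring, Real.Gamma_nat_eq_factorial,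
    show -(2 * (m : ℝ) + 2) / 2 = -((m + 1 : ℕ) : ℝ) by push_cast; ring,
    Real.rpow_neg hb.le, Real.rpow_natCast] at hpolar
  simp only [← Nat.cast_ofNat (R := ℝ), ← Nat.cast_mul, Real.rpow_natCast] at hpolar
  rw [integral_fun_norm_euclideanSpace_fin_two (fun r ↦ r ^ (2 * m) * Real.exp (-b * r ^ 2)),
    hpolar]
  field_simp

def vortex (γ : ℝ) (m : ℕ) (x : ℝ²) : ℂ :=
  ((γ ^ (((m : ℝ) + 1) / 2) / Real.sqrt (Real.pi * m.factorial) : ℝ) : ℂ) *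
    ((x 0 : ℂ) + I * (x 1 : ℂ)) ^ m * exp (((-(γ * ((x 0) ^ 2 + (x 1) ^ 2)) / 2 : ℝ) : ℂ))

def vortexProfile (γ : ℝ) (m : ℕ) (r : ℝ) : ℂ :=
  ((γ ^ (((m : ℝ) + 1) / 2) / Real.sqrt (Real.pi * m.factorial) : ℝ) : ℂ) *
    exp ((-(γ * r) / 2 : ℝ))

lemma vortex_eq_complexCoord_pow_mul (γ : ℝ) (m : ℕ) :
    vortex γ m = fun x ↦ complexCoord x ^ m * vortexProfile γ m (‖x‖ ^ 2) := by
  ext1 x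
  rw [vortex, vortexProfile, complexCoord_apply, EuclideanSpace.norm_sq_eq, Fin.sum_univ_two,
    Real.norm_eq_abs, Real.norm_eq_abs, sq_abs, sq_abs]
  ring

lemma angularMomentum_vortex (γ : ℝ) (m : ℕ) (x : ℝ²) :
    angularMomentum (vortex γ m) x = -I * m * vortex γ m x := by
  rw [vortex_eq_complexCoord_pow_mul]
  exact angularMomentum_complexCoord_pow_mul_radial m (by unfold vortexProfile; fun_prop) x

lemma norm_vortex_sq {γ : ℝ} (hγ : 0 ≤ γ) (m : ℕ) (x : ℝ²) :
    ‖vortex γ m x‖ ^ 2 =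
      γ ^ (m + 1) / (Real.pi * m.factorial) * (‖x‖ ^ (2 * m) * Real.exp (-γ * ‖x‖ ^ 2)) := by
  have hnormalization : (γ ^ (((m : ℝ) + 1) / 2)) ^ 2 = γ ^ (m + 1) := by
    rw [← Real.rpow_mul_natCast hγ, ← Real.rpow_natCast]
    push_cast
    ring_nf
  simp only [vortex_eq_complexCoord_pow_mul, vortexProfile]
  rw [norm_mul, norm_mul, norm_pow, norm_complexCoord, Complex.norm_real, Complex.norm_exp_ofReal,
    Real.norm_eq_abs, mul_pow, mul_pow, sq_abs, div_pow, hnormalization,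
    Real.sq_sqrt (by positivity), ← Real.exp_nat_mul, pow_mul']
  ring_nf

lemma integral_norm_vortex_sq {γ : ℝ} (hγ : 0 < γ) (m : ℕ) :
    ∫ x : ℝ², ‖vortex γ m x‖ ^ 2 = 1 := by
  simp_rw [norm_vortex_sq hγ.le]
  rw [integral_const_mul, integral_norm_pow_mul_exp_neg_mul_sq hγ]
  field_simp

lemma integral_conj_mul_angularMomentum_vortex {γ : ℝ} (hγ : 0 < γ) (m : ℕ) :
    ∫ x : ℝ², conj (vortex γ m x) * angularMomentum (vortex γ m) x = -I * m := by
  have hpointwise (x : ℝ²) : conj (vortex γ m x) * angularMomentum (vortex γ m) x =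
      -I * m * ((‖vortex γ m x‖ ^ 2 : ℝ) : ℂ) := by
    rw [angularMomentum_vortex, mul_left_comm, conj_mul', ofReal_pow]
  simp_rw [hpointwise]
  rw [integral_const_mul, integral_complex_ofReal, integral_norm_vortex_sq hγ, ofReal_one,
    mul_one]

end

/-- the angular-momentum pairing of the 2D vortex function `ψ_m` equals
`-i·m`, and consequently the rotational energy term equals `-m·Ω`. -/
theorem vortex_angular_momentum
    (γ : ℝ) (hγ : 0 < γ) (m : ℕ)
    (ψ : EuclideanSpace ℝ (Fin 2) → ℂ)
    (hψ : ∀ x : EuclideanSpace ℝ (Fin 2),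
      ψ x = ((γ ^ (((m : ℝ) + 1) / 2) / Real.sqrt (Real.pi * m.factorial) : ℝ) : ℂ) *
        ((x 0 : ℂ) + Complex.I * (x 1 : ℂ)) ^ m *
        Complex.exp (((-(γ * ((x 0) ^ 2 + (x 1) ^ 2)) / 2 : ℝ) : ℂ))) :
    (∫ x : EuclideanSpace ℝ (Fin 2),
        (starRingEnd ℂ) (ψ x) *
          ((x 1 : ℂ) * fderiv ℝ ψ x (EuclideanSpace.single 0 1) -
           (x 0 : ℂ) * fderiv ℝ ψ x (EuclideanSpace.single 1 1))) = -Complex.I * m ∧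
    ∀ Ω : ℝ,
      (-(Complex.I * (Ω : ℂ)) * ∫ x : EuclideanSpace ℝ (Fin 2),
          (starRingEnd ℂ) (ψ x) *
            ((x 1 : ℂ) * fderiv ℝ ψ x (EuclideanSpace.single 0 1) -
             (x 0 : ℂ) * fderiv ℝ ψ x (EuclideanSpace.single 1 1))).re = -(m : ℝ) * Ω := by
  obtain rfl : ψ = vortex γ m := funext hψ
  have hpairing := integral_conj_mul_angularMomentum_vortex hγ m
  unfold angularMomentum at hpairing
  refine ⟨hpairing, fun Ω ↦ ?_⟩
  rw [hpairing]
  simp [mul_comm]
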